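/- Let H be a bounded Hankel operator on H² and u = H𝟙. Then for every f ∈ H², S*(H(Hf)) − H(H(S*f)) = ⟨f, 𝟙⟩·S*(Hu) − ⟨f, Su⟩·u. -/

import Mathlib

open MeasureTheory Complex Filter

noncomputable section

namespace HankelSchmidt

instance fact_two_pi_pos : Fact (0 < 2 * Real.pi) := ⟨Real.two_pi_pos⟩

/-- The circle `𝕋`, realized as `ℝ / 2πℤ`. -/
abbrev Tc : Type := AddCircle (2 * Real.pi)

/-- Normalized arc-length (Haar) measure on the circle. -/
abbrev muc : Measure Tc := AddCircle.haarAddCircle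

/-- The space `L²(𝕋)`. -/
abbrev Ltwo := Lp ℂ 2 muc

/-- The Hardy space `H²`: the subspace of `L²(𝕋)` of functions whose Fourier coefficients
of negative index vanish. -/
def Hardy : Submodule ℂ Ltwo where
  carrier := {f | ∀ n : ℤ, n < 0 → fourierBasis.repr f n = 0}
  add_mem' := by
    intro a b ha hb n hn
    simp [map_add, lp.coeFn_add, ha n hn, hb n hn]
  zero_mem' := by
    intro n hn
    simp
  smul_mem' := by
    intro c a ha n hn
    simp [_root_.map_smul, lp.coeFn_smul, ha n hn]

theorem hardy_isClosed : IsClosed (Hardy : Set Ltwo) := by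
  have hset : (Hardy : Set Ltwo) =
      ⋂ (n : ℤ) (_ : n < 0), {f : Ltwo | fourierBasis.repr f n = 0} := by
    ext f
    simp only [Set.mem_iInter, Set.mem_setOf_eq]
    rfl
  rw [hset]
  refine isClosed_iInter fun n => isClosed_iInter fun hn => ?_
  have hcont : Continuous fun f : Ltwo => fourierBasis.repr f n := by
    have h1 : Continuous fun g : lp (fun _ : ℤ => ℂ) 2 => g n :=
      (continuous_apply n).comp lp.uniformContinuous_coe.continuous
    exact h1.comp fourierBasis.repr.continuous
  exact isClosed_eq hcont continuous_const

instance : CompleteSpace (Hardy : Submodule ℂ Ltwo) := hardy_isClosed.completeSpace_coe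

/-- The Hardy space as a type. -/
abbrev Hd := (Hardy : Submodule ℂ Ltwo)

/-- The orthogonal projection `P : L²(𝕋) → H²`. -/
def P2 : Ltwo → Hd := fun f => Hardy.orthogonalProjectionOnto f

/-- The orthogonal projection `P`, viewed as a map `L²(𝕋) → L²(𝕋)` with range `H²`. -/
def PL : Ltwo → Ltwo := fun f => ((P2 f : Hd) : Ltwo)

theorem fourierCoeff_congr_ae {f g : Tc → ℂ} (h : f =ᵐ[muc] g) (n : ℤ) :
    fourierCoeff f n = fourierCoeff g n :=
  integral_congr_ae (h.mono fun x hx => by dsimp only; rw [hx])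

theorem mem_Hardy_iff {f : Ltwo} :
    f ∈ Hardy ↔ ∀ n : ℤ, n < 0 → fourierCoeff (f : Tc → ℂ) n = 0 := by
  constructor
  · intro hf n hn; rw [← fourierBasis_repr]; exact hf n hn
  · intro hf n hn; rw [fourierBasis_repr]; exact hf n hn

/-- Pointwise multiplication by a bounded measurable function preserves `L²`. -/
theorem memLp_mul_of_bounded {g : Tc → ℂ} (hg : AEStronglyMeasurable g muc) {C : ℝ}
    (hb : ∀ᵐ x ∂muc, ‖g x‖ ≤ C) (f : Ltwo) :
    MemLp (fun x => g x * (f : Tc → ℂ) x) 2 muc := by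
  refine MemLp.of_le_mul (c := C) (Lp.memLp f) (hg.mul (Lp.aestronglyMeasurable f)) ?_
  filter_upwards [hb] with x hx
  rw [norm_mul]
  exact mul_le_mul_of_nonneg_right hx (norm_nonneg _)

theorem fourier_abs (n : ℤ) (x : Tc) : ‖fourier n x‖ = 1 := by
  rw [fourier_apply]; exact Circle.norm_coe _

theorem fourier_norm_one (n : ℤ) (x : Tc) : ‖fourier n x‖ ≤ 1 :=
  le_of_eq (fourier_abs n x)

/-- Multiplication of an `L²` function by the monomial `z^n`. -/
def mulF (n : ℤ) (f : Ltwo) : Ltwo :=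
  (memLp_mul_of_bounded ((map_continuous (fourier n)).aestronglyMeasurable)
    (Eventually.of_forall (fourier_norm_one n)) f).toLp _

theorem mulF_coe (n : ℤ) (f : Ltwo) :
    (mulF n f : Tc → ℂ) =ᵐ[muc] fun x => fourier n x * (f : Tc → ℂ) x :=
  MemLp.coeFn_toLp _

theorem fourierCoeff_fourier_mul (f : Tc → ℂ) (m n : ℤ) :
    fourierCoeff (fun x => fourier m x * f x) n = fourierCoeff f (n - m) := by
  unfold fourierCoeff
  refine integral_congr_ae (Eventually.of_forall fun x => ?_)
  have h : @fourier (2 * Real.pi) (-(n - m)) x = fourier (-n) x * fourier m x := by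
    rw [show -(n - m) = -n + m by ring, fourier_add]
  simp only [smul_eq_mul, h]
  ring

/-- The shift operator `S : H² → H²`, `(Sf)(z) = z·f(z)`. -/
def Sop (f : Hd) : Hd :=
  ⟨mulF 1 (f : Ltwo), by
    rw [mem_Hardy_iff]
    intro n hn
    rw [fourierCoeff_congr_ae (mulF_coe 1 (f : Ltwo)) n, fourierCoeff_fourier_mul]
    exact (mem_Hardy_iff.mp f.2) (n - 1) (by omega)⟩

/-- The adjoint shift `S* : H² → H²`, `S*f = P(z̄·f)`. -/
def SstarOp (f : Hd) : Hd := P2 (mulF (-1) (f : Ltwo))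

/-- The constant function `𝟙 ∈ H²`. -/
def oneH : Hd :=
  ⟨fourierLp 2 0, by
    rw [mem_Hardy_iff]
    intro n hn
    rw [← fourierBasis_repr]
    have h1 : (fourierLp (T := 2 * Real.pi) 2 0) = fourierBasis 0 := by
      rw [coe_fourierBasis]
    rw [h1, HilbertBasis.repr_self, lp.single_apply]
    rw [Pi.single_apply, if_neg (by omega : n ≠ 0)]⟩

/-- The inner product on `H²`, linear in the FIRST argument (the paper's convention
`⟨f, g⟩ = ∫ f ḡ`). -/
def ipH (f g : Hd) : ℂ := @inner ℂ Ltwo _ (g : Ltwo) (f : Ltwo)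

/-- The inner product on `L²(𝕋)`, linear in the FIRST argument. -/
def ipL (f g : Ltwo) : ℂ := @inner ℂ Ltwo _ g f

/-- `θ ∈ H²` is an inner function if `|θ(z)| = 1` a.e. on `𝕋`. -/
def IsInnerFn (θ : Hd) : Prop := ∀ᵐ x ∂muc, ‖((θ : Ltwo) : Tc → ℂ) x‖ = 1

/-- The set `θ·H² ⊆ L²(𝕋)` of pointwise a.e. products `θ·f`, `f ∈ H²`. -/
def thetaHardy (θ : Hd) : Set Ltwo :=
  {g : Ltwo | ∃ f : Hd, (g : Tc → ℂ) =ᵐ[muc]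
    fun x => ((θ : Ltwo) : Tc → ℂ) x * ((f : Ltwo) : Tc → ℂ) x}

/-- The model space `K_θ = H² ∩ (θH²)^⊥`, as a subset of `L²(𝕋)`. -/
def KspaceL (θ : Hd) : Set Ltwo :=
  {h : Ltwo | h ∈ Hardy ∧ ∀ g ∈ thetaHardy θ, ipL h g = 0}

/-- The model space `K_θ`, as a subset of `H²`. -/
def Kspace (θ : Hd) : Set Hd := {h : Hd | (h : Ltwo) ∈ KspaceL θ}

/-- `p` is an isometric multiplier on `K_θ`: `p` is measurable and, for every `h ∈ K_θ`,
the pointwise product `p·h` lies in `H²` and has the same norm as `h`. -/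
def IsIsomMult (p : Tc → ℂ) (θ : Hd) : Prop :=
  Measurable p ∧ ∀ h ∈ Kspace θ, ∃ g : Hd,
    ((g : Ltwo) : Tc → ℂ) =ᵐ[muc] (fun x => p x * ((h : Ltwo) : Tc → ℂ) x) ∧
    ‖(g : Ltwo)‖ = ‖(h : Ltwo)‖

/-- The subspace `p·K_θ = {p·h : h ∈ K_θ}` of `H²`. -/
def wModel (p : Tc → ℂ) (θ : Hd) : Set Hd :=
  {g : Hd | ∃ h ∈ Kspace θ, ((g : Ltwo) : Tc → ℂ) =ᵐ[muc]
    fun x => p x * ((h : Ltwo) : Tc → ℂ) x}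

/-- A bounded Hankel operator on `H²`: a continuous antilinear map `H : H² → H²`
satisfying `S*H = HS`. -/
def IsHankelOp (H : Hd →L⋆[ℂ] Hd) : Prop := ∀ f : Hd, SstarOp (H f) = H (Sop f)

/-- A bounded measurable symbol on the circle (an `L^∞` function). -/
def IsBddFn (u : Tc → ℂ) : Prop := Measurable u ∧ ∃ C : ℝ, ∀ᵐ x ∂muc, ‖u x‖ ≤ C

theorem memLp_mul_conj {u : Tc → ℂ} (hu : IsBddFn u) (f : Ltwo) :
    MemLp (fun x => u x * (starRingEnd ℂ) ((f : Tc → ℂ) x)) 2 muc := by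
  obtain ⟨hmeas, C, hC⟩ := hu
  refine MemLp.of_le_mul (c := C) (Lp.memLp f)
    (hmeas.aestronglyMeasurable.mul
      (continuous_star.comp_aestronglyMeasurable (Lp.aestronglyMeasurable f))) ?_
  filter_upwards [hC] with x hx
  rw [norm_mul, RCLike.norm_conj]
  exact mul_le_mul_of_nonneg_right hx (norm_nonneg _)

/-- The Hankel operator with symbol `u`: `H_u f = P(u·f̄)`, defined on all of `L²(𝕋)`. -/
def hankelL (u : Tc → ℂ) (hu : IsBddFn u) : Ltwo → Ltwo :=
  fun f => PL ((memLp_mul_conj hu f).toLp _)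

/-- The Möbius transformation `μ(z) = (α − z)/(1 − ᾱz)` of the unit disk. -/
def mobius (α z : ℂ) : ℂ := (α - z) / (1 - (starRingEnd ℂ) α * z)

/-- The point `e^{ix} ∈ ℂ` corresponding to `x ∈ 𝕋`. -/
def circlePt (x : Tc) : ℂ := fourier 1 x

/-- The Möbius transformation `μ` viewed as a self-map of `𝕋`. -/
def mobiusT (α : ℂ) (x : Tc) : Tc := ((Complex.arg (mobius α (circlePt x)) : ℝ) : Tc)

/-- The weight `√(1 − |α|²)/(1 − ᾱz)` in the definition of `U_μ`. -/
def umuWeight (α : ℂ) (x : Tc) : ℂ :=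
  (Real.sqrt (1 - ‖α‖ ^ 2) : ℂ) / (1 - (starRingEnd ℂ) α * circlePt x)

/-- `U` is the operator `U_μ`: `(U_μ f)(z) = (√(1 − |α|²)/(1 − ᾱz))·f(μ(z))` a.e. -/
def IsUmu (α : ℂ) (U : Ltwo → Ltwo) : Prop :=
  ∀ f : Ltwo, ((U f : Ltwo) : Tc → ℂ) =ᵐ[muc]
    fun x => umuWeight α x * (f : Tc → ℂ) (mobiusT α x)

/-!
Two facts drive the identity. First, `S S* = I − ⟪𝟙, ·⟫ 𝟙`, because `P` deletes from `z̄ g`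
exactly its `z̄`-coefficient `ĝ(0)`. Second, the Hankel symmetry `⟪𝟙, H g⟫ = ⟪g, H 𝟙⟫`: the
relation `S* H = H S` makes `⟪z^m, H z^k⟫` depend only on `m + k`, and the polynomials are dense
in `H²`. Applying `S S*` to `H S* f` and using `S* H = H S` twice gives
`S H f − H S* f = conj ⟪𝟙, f⟫ • S u − ⟪𝟙, H S* f⟫ • 𝟙`; applying `H` once more and the symmetry
turn this into the formula. (Mathlib's `⟪x, y⟫` is conjugate-linear in `x`, so `ipH f g = ⟪g, f⟫`.)
-/

theorem ipH_eq_inner (f g : Hd) : ipH f g = inner ℂ g f := rfl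

theorem mulF_smul (n : ℤ) (c : ℂ) (f : Ltwo) : mulF n (c • f) = c • mulF n f := by
  apply Lp.ext
  filter_upwards [mulF_coe n (c • f), mulF_coe n f, Lp.coeFn_smul c f,
    Lp.coeFn_smul c (mulF n f)] with x h1 h2 h3 h4
  rw [h4, Pi.smul_apply, h1, h2, h3, Pi.smul_apply, smul_eq_mul, smul_eq_mul, mul_left_comm]

theorem mulF_sub (n : ℤ) (f g : Ltwo) : mulF n (f - g) = mulF n f - mulF n g := by
  apply Lp.ext
  filter_upwards [mulF_coe n (f - g), mulF_coe n f, mulF_coe n g, Lp.coeFn_sub f g,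
    Lp.coeFn_sub (mulF n f) (mulF n g)] with x h1 h2 h3 h4 h5
  rw [h5, Pi.sub_apply, h1, h2, h3, h4, Pi.sub_apply, mul_sub]

theorem mulF_mulF (m n : ℤ) (f : Ltwo) : mulF m (mulF n f) = mulF (m + n) f := by
  apply Lp.ext
  filter_upwards [mulF_coe m (mulF n f), mulF_coe n f, mulF_coe (m + n) f] with x h1 h2 h3
  rw [h1, h2, h3, fourier_add, mul_assoc]

theorem mulF_zero (f : Ltwo) : mulF 0 f = f := by
  apply Lp.ext
  filter_upwards [mulF_coe 0 f] with x h1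
  rw [h1, fourier_zero, one_mul]

theorem mulF_fourierLp (m n : ℤ) : mulF m (fourierLp 2 n) = fourierLp 2 (m + n) := by
  apply Lp.ext
  filter_upwards [mulF_coe m (fourierLp 2 n), coeFn_fourierLp 2 n,
    coeFn_fourierLp 2 (m + n)] with x h1 h2 h3
  rw [h1, h2, h3, fourier_add]

theorem inner_mulF (n : ℤ) (f g : Ltwo) :
    inner ℂ (mulF n f) g = inner ℂ f (mulF (-n) g) := by
  rw [L2.inner_def, L2.inner_def]
  refine integral_congr_ae ?_
  filter_upwards [mulF_coe n f, mulF_coe (-n) g] with x h1 h2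
  rw [h1, h2, RCLike.inner_apply, RCLike.inner_apply, map_mul, ← fourier_neg]
  ring

theorem repr_mulF (m n : ℤ) (f : Ltwo) :
    fourierBasis.repr (mulF m f) n = fourierBasis.repr f (n - m) := by
  rw [fourierBasis_repr, fourierBasis_repr, fourierCoeff_congr_ae (mulF_coe m f) n,
    fourierCoeff_fourier_mul]

theorem repr_fourierLp (m n : ℤ) :
    fourierBasis.repr (fourierLp (T := 2 * Real.pi) 2 m) n = if n = m then 1 else 0 := by
  rw [← coe_fourierBasis, HilbertBasis.repr_self, lp.single_apply, Pi.single_apply]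

theorem fourierLp_mem_Hardy {m : ℤ} (hm : 0 ≤ m) :
    (fourierLp (T := 2 * Real.pi) 2 m : Ltwo) ∈ Hardy := fun n hn => by
  rw [repr_fourierLp, if_neg (by omega)]

theorem fourierLp_neg_one_mem_orthogonal_Hardy :
    (fourierLp (T := 2 * Real.pi) 2 (-1) : Ltwo) ∈ Hardyᗮ :=
  (Submodule.mem_orthogonal' _ _).2 fun u hu => by
    rw [← coe_fourierBasis, ← HilbertBasis.repr_apply_apply]
    exact hu (-1) (by norm_num)

def monomialH (k : ℕ) : Hd := ⟨fourierLp 2 (k : ℤ), fourierLp_mem_Hardy (Int.natCast_nonneg k)⟩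

theorem oneH_eq_monomialH_zero : oneH = monomialH 0 := rfl

theorem inner_monomialH (k : ℕ) (g : Hd) :
    inner ℂ (monomialH k) g = fourierBasis.repr (g : Ltwo) k := by
  rw [Submodule.coe_inner]
  show inner ℂ (fourierLp 2 (k : ℤ)) (g : Ltwo) = _
  rw [← coe_fourierBasis, ← HilbertBasis.repr_apply_apply]

theorem dense_span_monomialH : Dense (Submodule.span ℂ (Set.range monomialH) : Set Hd) := by
  rw [Submodule.dense_iff_topologicalClosure_eq_top, Submodule.topologicalClosure_eq_top_iff,
    Submodule.eq_bot_iff]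
  intro g hg
  have hcoeff (n : ℤ) : fourierBasis.repr (g : Ltwo) n = 0 := by
    rcases lt_or_ge n 0 with hn | hn
    · exact g.2 n hn
    · rw [← Int.toNat_of_nonneg hn, ← inner_monomialH]
      exact (Submodule.mem_orthogonal _ _).1 hg _ (Submodule.subset_span ⟨_, rfl⟩)
  exact Subtype.ext (fourierBasis.repr.map_eq_zero_iff.1 (lp.ext (funext hcoeff)))

theorem Sop_coe (f : Hd) : ((Sop f : Hd) : Ltwo) = mulF 1 (f : Ltwo) := rfl

theorem Sop_monomialH (k : ℕ) : Sop (monomialH k) = monomialH (k + 1) := by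
  apply Subtype.ext
  rw [Sop_coe]
  show mulF 1 (fourierLp 2 (k : ℤ)) = (fourierLp 2 ((k + 1 : ℕ) : ℤ) : Ltwo)
  rw [mulF_fourierLp, add_comm]
  push_cast
  rfl

theorem Sop_sub (f g : Hd) : Sop (f - g) = Sop f - Sop g :=
  Subtype.ext (mulF_sub 1 f g)

theorem Sop_smul (c : ℂ) (f : Hd) : Sop (c • f) = c • Sop f :=
  Subtype.ext (mulF_smul 1 c f)

theorem inner_Sop_left (a b : Hd) :
    inner ℂ (Sop a) b = inner ℂ a (SstarOp b) := by
  rw [Submodule.coe_inner, Sop_coe, inner_mulF]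
  exact (Hardy.inner_orthogonalProjectionOnto_eq_of_mem_left a _).symm

theorem SstarOp_coe (g : Hd) : ((SstarOp g : Hd) : Ltwo) =
    mulF (-1) (g : Ltwo) - fourierBasis.repr (g : Ltwo) 0 • fourierLp 2 (-1) := by
  refine Submodule.eq_starProjection_of_mem_orthogonal (fun n hn => ?_) ?_
  · rw [map_sub, lp.coeFn_sub, Pi.sub_apply, _root_.map_smul, lp.coeFn_smul, Pi.smul_apply,
      repr_mulF, repr_fourierLp, smul_eq_mul]
    rcases eq_or_ne n (-1) with rfl | h
    · rw [sub_self, if_pos rfl, mul_one, sub_self]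
    · rw [if_neg h, mul_zero, sub_zero]
      exact g.2 _ (by omega)
  · rw [sub_sub_cancel]
    exact Submodule.smul_mem _ _ fourierLp_neg_one_mem_orthogonal_Hardy

theorem Sop_SstarOp (g : Hd) : Sop (SstarOp g) = g - inner ℂ oneH g • oneH := by
  apply Subtype.ext
  rw [Sop_coe, SstarOp_coe, mulF_sub, mulF_mulF, mulF_smul, mulF_fourierLp, add_neg_cancel,
    mulF_zero, oneH_eq_monomialH_zero, inner_monomialH]
  rfl

namespace IsHankelOp

variable {H : Hd →L⋆[ℂ] Hd}

theorem inner_monomialH_apply_monomialH (hH : IsHankelOp H) (m k : ℕ) :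
    inner ℂ (monomialH m) (H (monomialH k)) =
      inner ℂ (monomialH (m + k)) (H oneH) := by
  induction k generalizing m with
  | zero => rfl
  | succ k ih =>
    rw [← Sop_monomialH, ← hH, ← inner_Sop_left, Sop_monomialH, ih, add_right_comm, add_assoc]

theorem inner_oneH_apply (hH : IsHankelOp H) (g : Hd) :
    inner ℂ oneH (H g) = inner ℂ g (H oneH) := by
  have h : (innerSL ℂ oneH).comp H = innerSLFlip ℂ (H oneH) := by
    refine ContinuousLinearMap.ext_on dense_span_monomialH ?_
    rintro _ ⟨k, rfl⟩
    simpa [oneH_eq_monomialH_zero] using hH.inner_monomialH_apply_monomialH 0 k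
  simpa using congrArg (· g) h

theorem Sop_apply_sub_apply_SstarOp (hH : IsHankelOp H) (f : Hd) :
    Sop (H f) - H (SstarOp f) =
      (starRingEnd ℂ) (inner ℂ oneH f) • Sop (H oneH) -
        inner ℂ oneH (H (SstarOp f)) • oneH := by
  have h := Sop_SstarOp (H (SstarOp f))
  rw [hH, Sop_SstarOp f, map_sub, map_smulₛₗ, Sop_sub, Sop_smul] at h
  rwa [sub_eq_sub_iff_sub_eq_sub]

end IsHankelOp

/-- The commutator identity `S*H² − H²S* = (·,𝟙)S*Hu − (·,Su)u`, where `u = H𝟙`. -/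
theorem sstar_Hsq_commutator (H : Hd →L⋆[ℂ] Hd) (hH : IsHankelOp H) (f : Hd) :
    SstarOp (H (H f)) - H (H (SstarOp f)) =
      ipH f oneH • SstarOp (H (H oneH)) - ipH f (Sop (H oneH)) • H oneH := by
  calc SstarOp (H (H f)) - H (H (SstarOp f))
      = H (Sop (H f) - H (SstarOp f)) := by rw [map_sub, hH]
    _ = inner ℂ oneH f • H (Sop (H oneH)) -
          (starRingEnd ℂ) (inner ℂ oneH (H (SstarOp f))) • H oneH := by
      rw [hH.Sop_apply_sub_apply_SstarOp, map_sub, map_smulₛₗ, map_smulₛₗ,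
        starRingEnd_self_apply]
    _ = _ := by
      rw [ipH_eq_inner, ipH_eq_inner, ← hH, hH.inner_oneH_apply,
        inner_conj_symm (H oneH) (SstarOp f), ← inner_Sop_left]

end HankelSchmidt
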